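/- arXiv:1710.09814 — 12 statements merged into one kernel-verified Lean document; each statement's English description precedes it below -/
import Mathlib

section
/- Let C be a nonempty closed subset of a Euclidean space X and L an affine subspace containing C. Then P_C ∘ P_L = P_C = P_L ∘ P_C, where P_C is the (set-valued) metric projection onto C and P_L the projection onto L. -/
/-- The set-valued metric projector onto a set `C`. -/
def projSet {X : Type*} [NormedAddCommGroup X] [InnerProductSpace ℝ X]
    (C : Set X) (x : X) : Set X :=
  {c ∈ C | dist x c = Metric.infDist x C}

theorem gDR_proj_comm {X : Type*} [NormedAddCommGroup X] [InnerProductSpace ℝ X]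
    [FiniteDimensional ℝ X]
    (C : Set X) (hCne : C.Nonempty) (hCcl : IsClosed C)
    (L : AffineSubspace ℝ X) [Nonempty L] (hCL : C ⊆ (L : Set X)) :
    (∀ x : X, projSet C ((EuclideanGeometry.orthogonalProjection L x : X)) = projSet C x) ∧
      (∀ x : X, ∀ c ∈ projSet C x,
        (EuclideanGeometry.orthogonalProjection L c : X) = c) := by
  have hfix : ∀ c ∈ C, (EuclideanGeometry.orthogonalProjection L c : X) = c := fun c hc =>
    (EuclideanGeometry.orthogonalProjection_eq_self_iff).2 (hCL hc)
  constructor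
  · intro x
    set p : X := (EuclideanGeometry.orthogonalProjection L x : X) with hp
    have key : ∀ c ∈ C, dist x c * dist x c = dist p c * dist p c + dist x p * dist x p := by
      intro c hc
      have := EuclideanGeometry.dist_sq_eq_dist_orthogonalProjection_sq_add_dist_orthogonalProjection_sq
        x (hCL hc)
      rw [dist_comm c x, dist_comm c p] at this
      exact this
    obtain ⟨c0, hc0, hdc0⟩ := hCcl.exists_infDist_eq_dist hCne p
    -- dist p c ≥ dist p c0 for all c ∈ C, with equality iff dist x c = dist x c0
    have hmono : ∀ c ∈ C, dist x c0 ≤ dist x c := by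
      intro c hc
      have hple : dist p c0 ≤ dist p c := hdc0 ▸ Metric.infDist_le_dist_of_mem hc
      have hsq : dist x c0 * dist x c0 ≤ dist x c * dist x c := by
        rw [key c hc, key c0 hc0]
        have := mul_le_mul hple hple dist_nonneg dist_nonneg
        linarith
      nlinarith [dist_nonneg (x := x) (y := c0), dist_nonneg (x := x) (y := c)]
    have hinfx : Metric.infDist x C = dist x c0 := by
      refine le_antisymm (Metric.infDist_le_dist_of_mem hc0) (le_of_not_gt fun hlt => ?_)
      obtain ⟨c, hc, hclt⟩ := (Metric.infDist_lt_iff hCne).1 hlt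
      exact absurd (hmono c hc) (not_le.2 hclt)
    have hiff : ∀ c ∈ C, dist x c = dist x c0 ↔ dist p c = dist p c0 := by
      intro c hc
      have h1 := key c hc
      have h2 := key c0 hc0
      constructor <;> intro h
      · refine (mul_self_inj_of_nonneg dist_nonneg dist_nonneg).1 ?_
        rw [h] at h1; linarith
      · refine (mul_self_inj_of_nonneg dist_nonneg dist_nonneg).1 ?_
        rw [h] at h1; linarith
    ext c
    simp only [projSet, Set.mem_setOf_eq, hinfx, hdc0]
    exact ⟨fun ⟨hc, h⟩ => ⟨hc, (hiff c hc).2 h⟩, fun ⟨hc, h⟩ => ⟨hc, (hiff c hc).1 h⟩⟩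
  · intro x c hc
    exact hfix c hc.1
end

section
/- Let C be a nonempty closed subset of a Euclidean space X, let L be an affine subspace containing C, and let λ ∈ ℝ. Then for every x ∈ X, d_C²(P_L^λ x) = d_C²(P_L x) + (1 − λ)² d_L²(x), where P_L^λ := (1 − λ) Id + λ P_L. In particular (λ = 0), d_C²(x) = d_C²(P_L x) + d_L²(x). -/
/-!
Since `x - P_L x` is orthogonal to the direction of `L`, Pythagoras gives, for every `c ∈ C ⊆ L`,
`‖P_L^λ x - c‖² = ‖P_L x - c‖² + (1 - λ)² d_L(x)²`. The squared distances to `c` from the two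
points thus differ by a constant independent of `c`, and such a shift survives taking the
infimum over `c ∈ C`.
-/

open Metric EuclideanGeometry

namespace Metric

variable {α : Type*} [PseudoMetricSpace α] {s : Set α} {x y : α}

lemma le_infDist_sq {r : ℝ} (hs : s.Nonempty) (h : ∀ c ∈ s, r ≤ dist x c ^ 2) :
    r ≤ infDist x s ^ 2 := by
  have hsqrt : √r ≤ infDist x s :=
    (le_infDist hs).2 fun c hc ↦ Real.sqrt_le_iff.2 ⟨dist_nonneg, h c hc⟩
  exact (Real.sqrt_le_iff.1 hsqrt).2

lemma infDist_sq_eq_of_dist_sq_eq {k : ℝ} (hs : s.Nonempty)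
    (h : ∀ c ∈ s, dist x c ^ 2 = dist y c ^ 2 + k) :
    infDist x s ^ 2 = infDist y s ^ 2 + k := by
  have sq_le {z c : α} (hc : c ∈ s) : infDist z s ^ 2 ≤ dist z c ^ 2 :=
    pow_le_pow_left₀ infDist_nonneg (infDist_le_dist_of_mem hc) 2
  refine le_antisymm ?_ (le_infDist_sq hs fun c hc ↦ by linarith [h c hc, sq_le (z := y) hc])
  have : infDist x s ^ 2 - k ≤ infDist y s ^ 2 :=
    le_infDist_sq hs fun c hc ↦ by linarith [h c hc, sq_le (z := x) hc]
  linarith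

end Metric

namespace EuclideanGeometry

variable {V P : Type*} [NormedAddCommGroup V] [InnerProductSpace ℝ V] [MetricSpace P]
  [NormedAddTorsor V P] {s : AffineSubspace ℝ P} [Nonempty s] [s.direction.HasOrthogonalProjection]

lemma dist_smul_vsub_orthogonalProjection_vadd_sq (x : P) (r : ℝ) {c : P} (hc : c ∈ s) :
    dist (r • (x -ᵥ orthogonalProjection s x) +ᵥ (orthogonalProjection s x : P)) c ^ 2
      = dist (orthogonalProjection s x : P) c ^ 2 + r ^ 2 * infDist x s ^ 2 := by
  have h := dist_sq_smul_orthogonal_vadd_smul_orthogonal_vadd (orthogonalProjection_mem x) hc r 0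
    (vsub_orthogonalProjection_mem_direction_orthogonal s x)
  rw [zero_smul, zero_vadd, sub_zero, ← dist_eq_norm_vsub, dist_orthogonalProjection_eq_infDist,
    Real.norm_eq_abs, abs_mul_abs_self] at h
  linear_combination h

lemma infDist_smul_vsub_orthogonalProjection_vadd_sq (x : P) (r : ℝ) {C : Set P}
    (hC : C.Nonempty) (hCs : C ⊆ s) :
    infDist (r • (x -ᵥ orthogonalProjection s x) +ᵥ (orthogonalProjection s x : P)) C ^ 2
      = infDist (orthogonalProjection s x : P) C ^ 2 + r ^ 2 * infDist x s ^ 2 :=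
  infDist_sq_eq_of_dist_sq_eq hC fun _ hc ↦ dist_smul_vsub_orthogonalProjection_vadd_sq x r (hCs hc)

end EuclideanGeometry

theorem gDR_aff_dist_general {X : Type*} [NormedAddCommGroup X] [InnerProductSpace ℝ X]
    [FiniteDimensional ℝ X]
    (C : Set X) (hCne : C.Nonempty)
    (L : AffineSubspace ℝ X) [Nonempty L] (hCL : C ⊆ (L : Set X)) (lam : ℝ) (x : X) :
    (Metric.infDist ((1 - lam) • x + lam • (EuclideanGeometry.orthogonalProjection L x : X)) C) ^ 2
        = (Metric.infDist ((EuclideanGeometry.orthogonalProjection L x : X)) C) ^ 2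
          + (1 - lam) ^ 2 * (Metric.infDist x (L : Set X)) ^ 2 ∧
      (Metric.infDist x C) ^ 2
        = (Metric.infDist ((EuclideanGeometry.orthogonalProjection L x : X)) C) ^ 2
          + (Metric.infDist x (L : Set X)) ^ 2 := by
  set p : X := (orthogonalProjection L x : X)
  have relaxed : (1 - lam) • x + lam • p = (1 - lam) • (x -ᵥ p) +ᵥ p := by
    rw [vsub_eq_sub, vadd_eq_add]
    module
  constructor
  · rw [relaxed]
    exact infDist_smul_vsub_orthogonalProjection_vadd_sq x (1 - lam) hCne hCL
  · simpa only [one_smul, vsub_vadd, one_pow, one_mul] using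
      infDist_smul_vsub_orthogonalProjection_vadd_sq x 1 hCne hCL

theorem gDR_aff_dist {X : Type*} [NormedAddCommGroup X] [InnerProductSpace ℝ X]
    [FiniteDimensional ℝ X]
    (C : Set X) (hCne : C.Nonempty) (hCcl : IsClosed C)
    (L : AffineSubspace ℝ X) [Nonempty L] (hCL : C ⊆ (L : Set X)) (lam : ℝ) (x : X) :
    (Metric.infDist ((1 - lam) • x + lam • (EuclideanGeometry.orthogonalProjection L x : X)) C) ^ 2
        = (Metric.infDist ((EuclideanGeometry.orthogonalProjection L x : X)) C) ^ 2
          + (1 - lam) ^ 2 * (Metric.infDist x (L : Set X)) ^ 2 ∧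
      (Metric.infDist x C) ^ 2
        = (Metric.infDist ((EuclideanGeometry.orthogonalProjection L x : X)) C) ^ 2
          + (Metric.infDist x (L : Set X)) ^ 2 :=
  gDR_aff_dist_general C hCne L hCL lam x
end

section
/- Let θ ∈ [0, 1), μ ∈ (0, 2], and let u, v be vectors in a real inner product space with ⟨u, v⟩ ≥ −θ‖u‖‖v‖. Then ‖u + μv‖² ≥ μ²(1 − θ²)‖v‖². -/
open RealInnerProductSpace

theorem gDR_const_lemma_first {X : Type*} [NormedAddCommGroup X] [InnerProductSpace ℝ X]
    (theta mu : ℝ) (htheta0 : 0 ≤ theta) (htheta1 : theta < 1)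
    (hmu0 : 0 < mu) (hmu2 : mu ≤ 2)
    (u v : X) (huv : ⟪u, v⟫ ≥ -theta * ‖u‖ * ‖v‖) :
    ‖u + mu • v‖ ^ 2 ≥ mu ^ 2 * (1 - theta ^ 2) * ‖v‖ ^ 2 := by
  have h := norm_add_sq_real u (mu • v)
  rw [norm_smul, real_inner_smul_right] at h
  simp only [Real.norm_eq_abs, abs_of_pos hmu0] at h
  nlinarith [sq_nonneg (‖u‖ - mu * theta * ‖v‖), mul_pos hmu0 hmu0, norm_nonneg u, norm_nonneg v]
end

section
/- Let θ ∈ [0, 1), μ ∈ (0, 2], and let u, v be vectors in a real inner product space with ⟨u, v⟩ ≥ −θ‖u‖‖v‖. Set ξ := 4μ²(1 − θ²) / (|1 − μ| + √((1 − μ)² + 4μ(1 − θ²)))². Then ‖u + μv‖² ≥ ξ ‖u + v‖². -/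
open RealInnerProductSpace

set_option maxHeartbeats 1000000

theorem gDR_const_lemma_second {X : Type*} [NormedAddCommGroup X] [InnerProductSpace ℝ X]
    (theta mu : ℝ) (htheta0 : 0 ≤ theta) (htheta1 : theta < 1)
    (hmu0 : 0 < mu) (hmu2 : mu ≤ 2)
    (u v : X) (huv : ⟪u, v⟫ ≥ -theta * ‖u‖ * ‖v‖)
    (xi : ℝ)
    (hxi : xi = 4 * mu ^ 2 * (1 - theta ^ 2) /
      (|1 - mu| + Real.sqrt ((1 - mu) ^ 2 + 4 * mu * (1 - theta ^ 2))) ^ 2) :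
    ‖u + mu • v‖ ^ 2 ≥ xi * ‖u + v‖ ^ 2 := by
  set a := ‖u‖ with ha
  set b := ‖v‖ with hb
  set t := ⟪u, v⟫ with ht
  have hth2 : theta ^ 2 < 1 := by nlinarith
  set r := |1 - mu| with hrdef
  have hr0 : 0 ≤ r := abs_nonneg _
  have hr2 : r ^ 2 = (1 - mu) ^ 2 := sq_abs _
  set s := Real.sqrt ((1 - mu) ^ 2 + 4 * mu * (1 - theta ^ 2)) with hsdef
  have hs0 : 0 ≤ s := Real.sqrt_nonneg _
  have hs2 : s ^ 2 = (1 - mu) ^ 2 + 4 * mu * (1 - theta ^ 2) :=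
    Real.sq_sqrt (by nlinarith)
  have hrs : r < s := lt_of_pow_lt_pow_left₀ 2 hs0 (by nlinarith)
  have hsr0 : 0 < s + r := by linarith
  have hsrne : s + r ≠ 0 := ne_of_gt hsr0
  have hxis : xi = mu * (s - r) / (s + r) := by
    rw [hxi, div_eq_div_iff (ne_of_gt (pow_pos (by linarith : (0:ℝ) < r + s) 2)) hsrne]
    linear_combination (-(mu * (s + r))) * hs2 + (mu * (s + r)) * hr2
  have heq : xi * (s + r) = mu * (s - r) := by
    rw [hxis]; field_simp
  -- key identity
  have key : (1 - xi) * (mu ^ 2 - xi) * (s + r) ^ 2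
      = theta ^ 2 * (mu - xi) ^ 2 * (s + r) ^ 2 := by
    linear_combination
      ((1 - theta ^ 2) * (xi * (s + r) + mu * (s - r))
        - (1 + mu ^ 2 - 2 * theta ^ 2 * mu) * (s + r)) * heq
      + (2 * mu ^ 2 * (1 - theta ^ 2) - mu * (1 + mu ^ 2 - 2 * theta ^ 2 * mu)) * hs2
      + (2 * mu ^ 2 * (1 - theta ^ 2) + mu * (1 + mu ^ 2 - 2 * theta ^ 2 * mu)) * hr2
  have hid : (1 - xi) * (mu ^ 2 - xi) = theta ^ 2 * (mu - xi) ^ 2 :=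
    mul_right_cancel₀ (pow_ne_zero 2 hsrne) key
  -- bounds on xi
  have hrge1 : 1 - mu ≤ r := le_abs_self _
  have hrge2 : mu - 1 ≤ r := by
    have := neg_abs_le (1 - mu); rw [← hrdef] at this; linarith
  have hsle : s ≤ 1 + mu := by nlinarith [sq_nonneg theta]
  have hxm : xi ≤ mu := by
    rw [hxis, div_le_iff₀ hsr0]
    nlinarith [mul_nonneg hmu0.le hr0]
  have hx1 : xi ≤ 1 := by
    rw [hxis, div_le_iff₀ hsr0]
    linarith [mul_nonneg (by linarith : (0:ℝ) ≤ r - (mu - 1)) hs0,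
      mul_nonneg hr0 (by linarith : (0:ℝ) ≤ 1 + mu - s)]
  have hxm2 : xi ≤ mu ^ 2 := by
    rw [hxis, div_le_iff₀ hsr0]
    have hmid : (1 - mu) * s ≤ (1 + mu) * r := by
      linarith [mul_nonneg (by linarith : (0:ℝ) ≤ r - (1 - mu)) hs0,
        mul_nonneg hr0 (by linarith : (0:ℝ) ≤ 1 + mu - s)]
    linarith [mul_le_mul_of_nonneg_left hmid hmu0.le]
  have h1 : 0 ≤ 1 - xi := by linarith
  have h2 : 0 ≤ mu ^ 2 - xi := by linarith
  have h3 : 0 ≤ mu - xi := by linarith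
  have ha0 : 0 ≤ a := norm_nonneg _
  have hb0 : 0 ≤ b := norm_nonneg _
  -- expand norms
  have e1 : ‖u + mu • v‖ ^ 2 = a ^ 2 + 2 * mu * t + mu ^ 2 * b ^ 2 := by
    rw [norm_add_sq_real, real_inner_smul_right, norm_smul, Real.norm_eq_abs,
      abs_of_pos hmu0]
    ring
  have e2 : ‖u + v‖ ^ 2 = a ^ 2 + 2 * t + b ^ 2 := by
    rw [norm_add_sq_real]
  rw [e1, e2]
  have H1 : 0 ≤ (mu - xi) * (t + theta * a * b) :=
    mul_nonneg h3 (by nlinarith [huv])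
  rcases eq_or_lt_of_le h1 with hc | hc
  · -- xi = 1
    have hxi1 : xi = 1 := by linarith
    have hz : theta * (mu - xi) = 0 := by
      have h0 : (theta * (mu - xi)) ^ 2 = 0 := by
        rw [mul_pow, ← hid, ← hc, zero_mul]
      exact sq_eq_zero_iff.mp h0
    have hz2 : theta * (mu - xi) * (a * b) = 0 := by rw [hz, zero_mul]
    have hG2 : a ^ 2 + 2 * mu * t + mu ^ 2 * b ^ 2 - xi * (a ^ 2 + 2 * t + b ^ 2)
        = (1 - xi) * a ^ 2 + 2 * ((mu - xi) * (t + theta * a * b))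
          - 2 * (theta * (mu - xi) * (a * b)) + (mu ^ 2 - xi) * b ^ 2 := by ring
    linarith [H1, hz2, hG2, mul_nonneg h2 (sq_nonneg b), mul_nonneg h1 (sq_nonneg a)]
  · set G : ℝ := a ^ 2 + 2 * mu * t + mu ^ 2 * b ^ 2 - xi * (a ^ 2 + 2 * t + b ^ 2)
      with hG
    have hcert : (1 - xi) * G =
        ((1 - xi) * a - theta * (mu - xi) * b) ^ 2
          + ((1 - xi) * (mu ^ 2 - xi) - theta ^ 2 * (mu - xi) ^ 2) * b ^ 2
          + 2 * (1 - xi) * ((mu - xi) * (t + theta * a * b)) := by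
      rw [hG]; ring
    have hmid0 : (1 - xi) * (mu ^ 2 - xi) - theta ^ 2 * (mu - xi) ^ 2 = 0 := by
      rw [hid]; ring
    have hGnn : 0 ≤ (1 - xi) * G := by
      rw [hcert, hmid0, zero_mul]
      have h4 := mul_nonneg (mul_nonneg (by norm_num : (0:ℝ) ≤ 2) h1) H1
      linarith [sq_nonneg ((1 - xi) * a - theta * (mu - xi) * b), h4]
    have hGpos : 0 ≤ G := (mul_nonneg_iff_of_pos_left hc).mp hGnn
    rw [hG] at hGpos
    linarith [hGpos]
end

section
/- Let (ε_n) be a sequence of nonnegative reals converging to 0, and let (x_n), (r_n), (s_n) be sequences in a real inner product space X with r_n ∉ {x_n, s_n} for all n and ‖x_n − s_n‖ ≤ ε_n(‖x_n − r_n‖ + ‖s_n − r_n‖). Then cos(∠x_n r_n s_n) → 1 as n → ∞, where ∠x_n r_n s_n is the angle between x_n − r_n and s_n − r_n. -/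
open RealInnerProductSpace Filter

lemma gDR_key {X : Type*} [NormedAddCommGroup X] [InnerProductSpace ℝ X]
    (a b : X) (ha : a ≠ 0) (hb : b ≠ 0) (ε : ℝ) (hε0 : 0 ≤ ε) (hε1 : ε ≤ 1/2)
    (h : ‖a - b‖ ≤ ε * (‖a‖ + ‖b‖)) :
    1 - 8 * ε ^ 2 ≤ ⟪a, b⟫ / (‖a‖ * ‖b‖) := by
  have hA : (0:ℝ) < ‖a‖ := norm_pos_iff.mpr ha
  have hB : (0:ℝ) < ‖b‖ := norm_pos_iff.mpr hb
  have hsq : ‖a - b‖ ^ 2 = ‖a‖ ^ 2 - 2 * ⟪a, b⟫ + ‖b‖ ^ 2 := by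
    rw [@norm_sub_sq_real X]
  have h1 : ‖a‖ - ‖b‖ ≤ ‖a - b‖ := (abs_le.mp (abs_norm_sub_norm_le a b)).2
  have h2 : ‖b‖ - ‖a‖ ≤ ‖a - b‖ := by
    have := (abs_le.mp (abs_norm_sub_norm_le a b)).1; linarith
  have hD : (0:ℝ) ≤ ‖a - b‖ := norm_nonneg _
  rw [le_div_iff₀ (by positivity)]
  -- From h1, h2, h: ‖a‖ ≤ 3‖b‖ and ‖b‖ ≤ 3‖a‖
  have hab3 : ‖a‖ ≤ 3 * ‖b‖ := by nlinarith
  have hba3 : ‖b‖ ≤ 3 * ‖a‖ := by nlinarith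
  have e1 := mul_le_mul_of_nonneg_left hab3 (by positivity : (0:ℝ) ≤ ε ^ 2 * ‖a‖)
  have e2 := mul_le_mul_of_nonneg_left hba3 (by positivity : (0:ℝ) ≤ ε ^ 2 * ‖b‖)
  have e3 : ‖a - b‖ ^ 2 ≤ ε ^ 2 * (‖a‖ + ‖b‖) ^ 2 := by
    nlinarith [mul_le_mul h h hD (by positivity : (0:ℝ) ≤ ε * (‖a‖ + ‖b‖))]
  have e4 : ε ^ 2 * (‖a‖ * ‖b‖) ≥ 0 := by positivity
  nlinarith [sq_nonneg (‖a‖ - ‖b‖), mul_pos hA hB, e1, e2, e3, e4]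

theorem gDR_angle_lemma {X : Type*} [NormedAddCommGroup X] [InnerProductSpace ℝ X]
    (eps : ℕ → ℝ) (heps0 : ∀ n, 0 ≤ eps n) (hepslim : Tendsto eps atTop (nhds 0))
    (x r s : ℕ → X)
    (hxr : ∀ n, r n ≠ x n) (hsr : ∀ n, r n ≠ s n)
    (hclose : ∀ n, ‖x n - s n‖ ≤ eps n * (‖x n - r n‖ + ‖s n - r n‖)) :
    Tendsto (fun n => ⟪x n - r n, s n - r n⟫ / (‖x n - r n‖ * ‖s n - r n‖))
      atTop (nhds 1) := by
  have hlow : Tendsto (fun n => 1 - 8 * eps n ^ 2) atTop (nhds 1) := by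
    have : Tendsto (fun n => 1 - 8 * eps n ^ 2) atTop (nhds (1 - 8 * (0:ℝ) ^ 2)) := by
      exact (tendsto_const_nhds.sub ((hepslim.pow 2).const_mul 8))
    simpa using this
  apply tendsto_of_tendsto_of_tendsto_of_le_of_le' hlow tendsto_const_nhds
  · have hev : ∀ᶠ n in atTop, eps n ≤ 1/2 := by
      have := hepslim.eventually (eventually_le_nhds (by norm_num : (0:ℝ) < 1/2))
      exact this
    filter_upwards [hev] with n hn
    have hxs : ‖x n - s n‖ = ‖(x n - r n) - (s n - r n)‖ := by
      congr 1; abel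
    exact gDR_key (x n - r n) (s n - r n)
      (sub_ne_zero.mpr (hxr n).symm)
      (sub_ne_zero.mpr (hsr n).symm)
      (eps n) (heps0 n) hn (by rw [← hxs]; exact hclose n)
  · exact Eventually.of_forall fun n => (abs_le.mp (abs_real_inner_div_norm_mul_norm_le_one _ _)).2
end

section
/- Let C, U be nonempty subsets of a Euclidean space X, γ ≥ 1, β ≥ 0, and λ ∈ (0, 1 + β]. A set-valued operator T : X ⇉ X is (C, γ, β)-quasi firmly Fejér monotone on U if and only if T^λ := (1 − λ) Id + λ T is (C, 1 − λ + λγ, (1 − λ + β)/λ)-quasi firmly Fejér monotone on U. -/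
/-- `T` is `(C, γ, β)`-quasi firmly Fejér monotone on `U`. -/
def QuasiFirmlyFejer {X : Type*} [NormedAddCommGroup X] [InnerProductSpace ℝ X]
    (T : X → Set X) (C U : Set X) (gam beta : ℝ) : Prop :=
  ∀ x ∈ U, ∀ xp ∈ T x, ∀ xb ∈ C,
    ‖xp - xb‖ ^ 2 + beta * ‖x - xp‖ ^ 2 ≤ gam * ‖x - xb‖ ^ 2

/-! The relaxation step is an exact identity: with `x₊ = (1 - λ) x + λ s`,
`‖x₊ - x̄‖² + ((1 - λ + β)/λ) ‖x - x₊‖² = (1 - λ) ‖x - x̄‖² + λ (‖s - x̄‖² + β ‖x - s‖²)`,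
so the Fejér inequality for `T^λ` with constant `1 - λ + λγ` is `λ` times the one for `T`
with constant `γ`, shifted by `(1 - λ) ‖x - x̄‖²`. -/

section

variable {X : Type*} [NormedAddCommGroup X] [InnerProductSpace ℝ X]

theorem norm_one_sub_smul_add_smul_sq (a b : X) (t : ℝ) :
    ‖(1 - t) • a + t • b‖ ^ 2
      = (1 - t) * ‖a‖ ^ 2 + t * ‖b‖ ^ 2 - t * (1 - t) * ‖a - b‖ ^ 2 := by
  simp only [← real_inner_self_eq_norm_sq, inner_add_add_self, inner_sub_sub_self,
    real_inner_smul_left, real_inner_smul_right]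
  ring

/-- Holds for every `λ`: at `λ = 0` both sides are `‖x - y‖²` since `β / 0 = 0`. -/
theorem norm_relax_sub_sq_add (x s y : X) (lam beta : ℝ) :
    ‖((1 - lam) • x + lam • s) - y‖ ^ 2
        + (1 - lam + beta) / lam * ‖x - ((1 - lam) • x + lam • s)‖ ^ 2
      = (1 - lam) * ‖x - y‖ ^ 2 + lam * (‖s - y‖ ^ 2 + beta * ‖x - s‖ ^ 2) := by
  have hsub : ((1 - lam) • x + lam • s) - y = (1 - lam) • (x - y) + lam • (s - y) := by
    module
  have hstep : x - ((1 - lam) • x + lam • s) = lam • (x - s) := by module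
  have hdiff : (x - y) - (s - y) = x - s := sub_sub_sub_cancel_right x s y
  have hcoef : (1 - lam + beta) / lam * lam ^ 2 = (1 - lam + beta) * lam := by
    rcases eq_or_ne lam 0 with rfl | hlam
    · simp
    · field_simp
  rw [hsub, hstep, norm_one_sub_smul_add_smul_sq, hdiff, norm_smul, mul_pow,
    Real.norm_eq_abs, sq_abs, ← mul_assoc, hcoef]
  ring

theorem relax_fejer_ineq_iff {x s y : X} {lam gam beta : ℝ} (hlam : 0 < lam) :
    ‖((1 - lam) • x + lam • s) - y‖ ^ 2
        + (1 - lam + beta) / lam * ‖x - ((1 - lam) • x + lam • s)‖ ^ 2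
        ≤ (1 - lam + lam * gam) * ‖x - y‖ ^ 2
      ↔ ‖s - y‖ ^ 2 + beta * ‖x - s‖ ^ 2 ≤ gam * ‖x - y‖ ^ 2 := by
  rw [norm_relax_sub_sq_add, add_mul, mul_assoc, add_le_add_iff_left,
    mul_le_mul_iff_of_pos_left hlam]

end

theorem gDR_averaged_qffm_general {X : Type*} [NormedAddCommGroup X] [InnerProductSpace ℝ X]
    (C U : Set X)
    (gam beta lam : ℝ)
    (hlam0 : 0 < lam)
    (T : X → Set X) :
    QuasiFirmlyFejer T C U gam beta ↔
      QuasiFirmlyFejer (fun x => (fun s => (1 - lam) • x + lam • s) '' T x) C U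
        (1 - lam + lam * gam) ((1 - lam + beta) / lam) := by
  simp only [QuasiFirmlyFejer, Set.forall_mem_image, relax_fejer_ineq_iff hlam0]

theorem gDR_averaged_qffm {X : Type*} [NormedAddCommGroup X] [InnerProductSpace ℝ X]
    (C U : Set X) (hCne : C.Nonempty) (hUne : U.Nonempty)
    (gam beta lam : ℝ) (hgam : 1 ≤ gam) (hbeta : 0 ≤ beta)
    (hlam0 : 0 < lam) (hlam1 : lam ≤ 1 + beta)
    (T : X → Set X) :
    QuasiFirmlyFejer T C U gam beta ↔
      QuasiFirmlyFejer (fun x => (fun s => (1 - lam) • x + lam • s) '' T x) C U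
        (1 - lam + lam * gam) ((1 - lam + beta) / lam) :=
  gDR_averaged_qffm_general C U gam beta lam hlam0 T
end

section
/- Let T₁, T₂ be set-valued operators on a Euclidean space X, with T_i being (C_i, γ_i, β_i)-quasi firmly Fejér monotone on U_i (γ_i ≥ 1, β_i > 0), and suppose T₁U₁ ⊆ U₂. Set C := C₁ ∩ C₂, γ := γ₁γ₂, and β := (1/β₁ + 1/β₂)^{-1}. Then T₂ ∘ T₁ is (C, γ, β)-quasi firmly Fejér monotone on U₁. -/
theorem gDR_composition_qffm {X : Type*} [NormedAddCommGroup X] [InnerProductSpace ℝ X]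
    (T₁ T₂ : X → Set X) (C₁ C₂ U₁ U₂ : Set X)
    (gam₁ gam₂ beta₁ beta₂ : ℝ)
    (hgam₁ : 1 ≤ gam₁) (hgam₂ : 1 ≤ gam₂) (hbeta₁ : 0 < beta₁) (hbeta₂ : 0 < beta₂)
    (hU₁ne : U₁.Nonempty) (hU₂ne : U₂.Nonempty) (hCne : (C₁ ∩ C₂).Nonempty)
    (hT₁ : QuasiFirmlyFejer T₁ C₁ U₁ gam₁ beta₁)
    (hT₂ : QuasiFirmlyFejer T₂ C₂ U₂ gam₂ beta₂)
    (hrange : ∀ x ∈ U₁, T₁ x ⊆ U₂) :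
    QuasiFirmlyFejer (fun x => ⋃ y ∈ T₁ x, T₂ y) (C₁ ∩ C₂) U₁ (gam₁ * gam₂)
      (1 / beta₁ + 1 / beta₂)⁻¹ := by
  intro x hx z hz xb hxb
  simp only [Set.mem_iUnion] at hz
  obtain ⟨y, hy, hzy⟩ := hz
  have h1 := hT₁ x hx y hy xb hxb.1
  have h2 := hT₂ y (hrange x hx hy) z hzy xb hxb.2
  have hxz : ‖x - z‖ ≤ ‖x - y‖ + ‖y - z‖ := by
    calc ‖x - z‖ = ‖(x - y) + (y - z)‖ := by rw [sub_add_sub_cancel]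
    _ ≤ ‖x - y‖ + ‖y - z‖ := norm_add_le _ _
  have hs : 0 < 1 / beta₁ + 1 / beta₂ := by positivity
  have key : (1 / beta₁ + 1 / beta₂)⁻¹ * ‖x - z‖ ^ 2 ≤
      beta₁ * ‖x - y‖ ^ 2 + beta₂ * ‖y - z‖ ^ 2 := by
    rw [inv_mul_le_iff₀ hs]
    have h3 : ‖x - z‖ ^ 2 ≤ (‖x - y‖ + ‖y - z‖) ^ 2 := by
      have := norm_nonneg (x - z)
      nlinarith [norm_nonneg (x - y), norm_nonneg (y - z)]
    refine h3.trans ?_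
    rw [div_add_div _ _ (ne_of_gt hbeta₁) (ne_of_gt hbeta₂), div_mul_eq_mul_div,
      le_div_iff₀ (by positivity)]
    nlinarith [sq_nonneg (beta₁ * ‖x - y‖ - beta₂ * ‖y - z‖), norm_nonneg (x - y),
      norm_nonneg (y - z)]
  have hg2 : (0:ℝ) ≤ gam₂ := le_trans zero_le_one hgam₂
  nlinarith [mul_le_mul_of_nonneg_left h1 hg2,
    mul_nonneg (mul_nonneg (sub_nonneg.mpr hgam₂) hbeta₁.le) (sq_nonneg ‖x - y‖)]
end

section
/- Let C be a nonempty subset of a Euclidean space X, L an affine subspace containing C, w ∈ C, ε ∈ [0, 1), δ > 0, and λ ∈ (0, 2]. Suppose C is closed and (ε, δ)-regular at w. Set Ω := C ∩ B(w, δ), γ := 1 + λε/(1 − ε), β := (2 − λ)/λ. Then P_C^λ is (Ω + (L − L)^⊥, γ, β)-quasi firmly Fejér monotone on B(w, δ/2) ∩ L, i.e., for all x ∈ B(w, δ/2) ∩ L, x₊ ∈ P_C^λ x, x̄ ∈ Ω + (L − L)^⊥: ‖x₊ − x̄‖² + β‖x − x₊‖² ≤ γ‖x − x̄‖². -/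
/-!
For `p ∈ P_C x` and `x̄ = c + v` with `c ∈ Ω`, `v ⊥ (L - L)`, the relaxed step
`x₊ = x - λ (x - p)` satisfies the exact identity
`‖x₊ - x̄‖² + β ‖x - x₊‖² = ‖x - x̄‖² - 2λ ⟪x - p, p - c⟫`,
because `v` is orthogonal to `x - p ∈ L - L`. Since `‖x - w‖ ≤ δ/2` and `w ∈ C`, the projection `p`
lies in `B(w, δ)`, so regularity applied to the proximal normal `x - p` at `p` gives
`⟪x - p, p - c⟫ ≥ -ε ‖x - p‖ ‖p - c‖`. With AM-GM this yields
`-2 ⟪x - p, p - c⟫ ≤ ε/(1 - ε) ‖x - c‖²`, and `‖x - c‖ ≤ ‖x - x̄‖` by Pythagoras.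
-/

open Pointwise

/-- The proximal normal cone to `C` at `x`. -/
def proxNormalCone {X : Type*} [NormedAddCommGroup X] [InnerProductSpace ℝ X]
    (C : Set X) (x : X) : Set X :=
  {u | ∃ z : X, ∃ t : ℝ, 0 ≤ t ∧ x ∈ projSet C z ∧ u = t • (z - x)}

/-- `C` is `(ε, δ)`-regular at `w`. -/
def EpsDeltaRegular {X : Type*} [NormedAddCommGroup X] [InnerProductSpace ℝ X]
    (C : Set X) (w : X) (eps delta : ℝ) : Prop :=
  ∀ x ∈ C ∩ Metric.closedBall w delta, ∀ y ∈ C ∩ Metric.closedBall w delta,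
    ∀ u ∈ proxNormalCone C x,
      inner ℝ u (x - y) ≥ -eps * ‖u‖ * ‖x - y‖ 

open RealInnerProductSpace

section InnerProductSpace

variable {X : Type*} [NormedAddCommGroup X] [InnerProductSpace ℝ X]

theorem dist_le_of_mem_projSet {C : Set X} {x p y : X} (hp : p ∈ projSet C x) (hy : y ∈ C) :
    dist x p ≤ dist x y :=
  hp.2 ▸ Metric.infDist_le_dist_of_mem hy

theorem mem_closedBall_of_mem_projSet {C : Set X} {x p w : X} {r : ℝ} (hp : p ∈ projSet C x)
    (hw : w ∈ C) (hx : x ∈ Metric.closedBall w (r / 2)) : p ∈ Metric.closedBall w r := by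
  rw [Metric.mem_closedBall] at hx ⊢
  calc dist p w ≤ dist x p + dist x w := dist_triangle_left p w x
    _ ≤ r / 2 + r / 2 := add_le_add ((dist_le_of_mem_projSet hp hw).trans hx) hx
    _ = r := add_halves r

theorem sub_mem_proxNormalCone_of_mem_projSet {C : Set X} {x p : X} (hp : p ∈ projSet C x) :
    x - p ∈ proxNormalCone C p :=
  ⟨x, 1, zero_le_one, hp, (one_smul ℝ _).symm⟩

/-- No hypothesis on `lam` is needed: at `lam = 0` the second term is `(2 / 0) * 0 = 0`. -/
theorem norm_relaxed_sub_sq_add_eq (lam : ℝ) (x p z : X) :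
    ‖(1 - lam) • x + lam • p - z‖ ^ 2 + (2 - lam) / lam * ‖x - ((1 - lam) • x + lam • p)‖ ^ 2 =
      ‖x - z‖ ^ 2 - 2 * lam * ⟪x - p, p - z⟫ := by
  have hstep : (1 - lam) • x + lam • p - z = (x - z) - lam • (x - p) := by
    rw [sub_smul, smul_sub, one_smul]; abel
  have hdisp : x - ((1 - lam) • x + lam • p) = lam • (x - p) := by
    rw [sub_smul, smul_sub, one_smul]; abel
  have hsplit : x - z = (x - p) + (p - z) := by abel
  rw [hstep, hdisp, norm_sub_sq_real, real_inner_smul_right, norm_smul, mul_pow,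
    Real.norm_eq_abs, sq_abs, hsplit, inner_add_left, real_inner_self_eq_norm_sq,
    real_inner_comm (p - z)]
  field_simp
  ring

theorem neg_two_mul_inner_le_of_neg_mul_le_inner {a b : X} {eps : ℝ} (heps0 : 0 ≤ eps)
    (heps1 : eps < 1) (hab : -eps * ‖a‖ * ‖b‖ ≤ ⟪a, b⟫) :
    -2 * ⟪a, b⟫ ≤ eps / (1 - eps) * ‖a + b‖ ^ 2 := by
  rw [div_mul_eq_mul_div, le_div_iff₀ (by linarith), norm_add_sq_real]
  nlinarith [mul_nonneg heps0 (sq_nonneg (‖a‖ - ‖b‖))]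

theorem norm_relaxed_sub_sq_add_le {x p c v : X} {eps lam : ℝ} (heps0 : 0 ≤ eps)
    (heps1 : eps < 1) (hlam : 0 < lam) (hangle : -eps * ‖x - p‖ * ‖p - c‖ ≤ ⟪x - p, p - c⟫)
    (hvp : ⟪x - p, v⟫ = 0) (hvc : ⟪x - c, v⟫ = 0) :
    ‖(1 - lam) • x + lam • p - (c + v)‖ ^ 2 +
        (2 - lam) / lam * ‖x - ((1 - lam) • x + lam • p)‖ ^ 2 ≤
      (1 + lam * eps / (1 - eps)) * ‖x - (c + v)‖ ^ 2 := by
  have hpyth : ‖x - (c + v)‖ ^ 2 = ‖x - c‖ ^ 2 + ‖v‖ ^ 2 := by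
    rw [← sub_sub, sq, sq, sq, norm_sub_sq_eq_norm_sq_add_norm_sq_real hvc]
  have hinner : ⟪x - p, p - (c + v)⟫ = ⟪x - p, p - c⟫ := by
    rw [← sub_sub, inner_sub_right, hvp, sub_zero]
  have hkey := neg_two_mul_inner_le_of_neg_mul_le_inner heps0 heps1 hangle
  rw [sub_add_sub_cancel] at hkey
  have hfrac : 0 ≤ eps / (1 - eps) := div_nonneg heps0 (by linarith)
  rw [norm_relaxed_sub_sq_add_eq, hinner, mul_div_assoc, hpyth]
  nlinarith [mul_le_mul_of_nonneg_left hkey hlam.le,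
    mul_nonneg hlam.le (mul_nonneg hfrac (sq_nonneg ‖v‖))]

end InnerProductSpace

theorem gDR_rproj_qffm_general {X : Type*} [NormedAddCommGroup X] [InnerProductSpace ℝ X]
    (C : Set X)
    (L : AffineSubspace ℝ X) (hCL : C ⊆ (L : Set X))
    (w : X) (hw : w ∈ C)
    (eps delta lam : ℝ) (heps0 : 0 ≤ eps) (heps1 : eps < 1)
    (hlam0 : 0 < lam)
    (hreg : EpsDeltaRegular C w eps delta) :
    ∀ x ∈ Metric.closedBall w (delta / 2) ∩ (L : Set X),
      ∀ xp ∈ (fun c => (1 - lam) • x + lam • c) '' projSet C x,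
        ∀ xb ∈ (C ∩ Metric.closedBall w delta) + (L.directionᗮ : Set X),
          ‖xp - xb‖ ^ 2 + ((2 - lam) / lam) * ‖x - xp‖ ^ 2 ≤
            (1 + lam * eps / (1 - eps)) * ‖x - xb‖ ^ 2 := by
  rintro x ⟨hx, hxL⟩ _ ⟨p, hp, rfl⟩ _ ⟨c, hc, v, hv, rfl⟩
  have horth : ∀ y ∈ C, ⟪x - y, v⟫ = 0 := fun y hy =>
    Submodule.inner_right_of_mem_orthogonal (L.vsub_mem_direction hxL (hCL hy)) hv
  have hangle := hreg p ⟨hp.1, mem_closedBall_of_mem_projSet hp hw hx⟩ c hc (x - p)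
    (sub_mem_proxNormalCone_of_mem_projSet hp)
  exact norm_relaxed_sub_sq_add_le heps0 heps1 hlam0 hangle (horth p hp.1) (horth c hc.1)

theorem gDR_rproj_qffm {X : Type*} [NormedAddCommGroup X] [InnerProductSpace ℝ X]
    [FiniteDimensional ℝ X]
    (C : Set X) (hCne : C.Nonempty) (hCcl : IsClosed C)
    (L : AffineSubspace ℝ X) [Nonempty L] (hCL : C ⊆ (L : Set X))
    (w : X) (hw : w ∈ C)
    (eps delta lam : ℝ) (heps0 : 0 ≤ eps) (heps1 : eps < 1) (hdelta : 0 < delta)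
    (hlam0 : 0 < lam) (hlam2 : lam ≤ 2)
    (hreg : EpsDeltaRegular C w eps delta) :
    ∀ x ∈ Metric.closedBall w (delta / 2) ∩ (L : Set X),
      ∀ xp ∈ (fun c => (1 - lam) • x + lam • c) '' projSet C x,
        ∀ xb ∈ (C ∩ Metric.closedBall w delta) + (L.directionᗮ : Set X),
          ‖xp - xb‖ ^ 2 + ((2 - lam) / lam) * ‖x - xp‖ ^ 2 ≤
            (1 + lam * eps / (1 - eps)) * ‖x - xb‖ ^ 2 :=
  gDR_rproj_qffm_general C L hCL w hw eps delta lam heps0 heps1 hlam0 hreg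
end

section
/- Let C be a nonempty subset of a Euclidean space X, L a closed subset of X, and T : X → X a continuous single-valued operator. Suppose Fix T ∩ L ⊆ C and that for every w ∈ C there exist ν, δ > 0 such that ‖x − Tx‖ ≥ ν d_C(x) for all x ∈ B(w, δ) ∩ L. Then for every bounded set S ⊆ X there exists ν_S > 0 such that ‖x − Tx‖ ≥ ν_S d_C(x) for all x ∈ S ∩ L. -/
theorem gDR_global_quasi_coercive {X : Type*} [NormedAddCommGroup X] [InnerProductSpace ℝ X]
    [FiniteDimensional ℝ X]
    (C : Set X) (hCne : C.Nonempty)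
    (L : Set X) (hLcl : IsClosed L)
    (T : X → X) (hTcont : Continuous T)
    (hFix : {x : X | T x = x} ∩ L ⊆ C)
    (hlocal : ∀ w ∈ C, ∃ nu delta : ℝ, 0 < nu ∧ 0 < delta ∧
      ∀ x ∈ Metric.closedBall w delta ∩ L, nu * Metric.infDist x C ≤ ‖x - T x‖) :
    ∀ S : Set X, Bornology.IsBounded S →
      ∃ nuS : ℝ, 0 < nuS ∧ ∀ x ∈ S ∩ L, nuS * Metric.infDist x C ≤ ‖x - T x‖ := by
  intro S hS
  by_contra hcon
  push_neg at hcon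
  -- extract a sequence
  have hseq : ∀ n : ℕ, ∃ x ∈ S ∩ L,
      ‖x - T x‖ < (1 / (n + 1 : ℝ)) * Metric.infDist x C := by
    intro n
    obtain ⟨x, hx, hlt⟩ := hcon (1 / (n + 1 : ℝ)) (by positivity)
    exact ⟨x, hx, hlt⟩
  choose x hxSL hxlt using hseq
  have hxS : ∀ n, x n ∈ S := fun n => (hxSL n).1
  have hxL : ∀ n, x n ∈ L := fun n => (hxSL n).2
  -- compactness
  have hcomp : IsCompact (closure S) := hS.isCompact_closure
  obtain ⟨z, hzcl, φ, hφ, hlim⟩ :=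
    hcomp.tendsto_subseq (fun n => subset_closure (hxS n))
  have hzL : z ∈ L := hLcl.mem_of_tendsto hlim (Filter.Eventually.of_forall fun n => hxL (φ n))
  have hφtop : Filter.Tendsto φ Filter.atTop Filter.atTop := hφ.tendsto_atTop
  have hinv : Filter.Tendsto (fun n => (1 / (φ n + 1 : ℝ))) Filter.atTop (nhds 0) :=
    tendsto_one_div_add_atTop_nhds_zero_nat.comp hφtop
  have hdist : Filter.Tendsto (fun n => Metric.infDist (x (φ n)) C) Filter.atTop
      (nhds (Metric.infDist z C)) :=
    ((Metric.continuous_infDist_pt C).continuousAt).tendsto.comp hlim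
  have hub : Filter.Tendsto (fun n => (1 / (φ n + 1 : ℝ)) * Metric.infDist (x (φ n)) C)
      Filter.atTop (nhds 0) := by
    have := hinv.mul hdist
    simpa using this
  have hnorm : Filter.Tendsto (fun n => ‖x (φ n) - T (x (φ n))‖) Filter.atTop (nhds 0) := by
    apply tendsto_of_tendsto_of_tendsto_of_le_of_le tendsto_const_nhds hub
    · intro n; exact norm_nonneg _
    · intro n; exact le_of_lt (hxlt (φ n))
  have hnorm' : Filter.Tendsto (fun n => ‖x (φ n) - T (x (φ n))‖) Filter.atTop
      (nhds ‖z - T z‖) :=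
    ((continuous_id.sub hTcont).norm.continuousAt).tendsto.comp hlim
  have hzfix : T z = z := by
    have h0 : ‖z - T z‖ = 0 := tendsto_nhds_unique hnorm' hnorm
    exact (sub_eq_zero.mp (norm_eq_zero.mp h0)).symm
  have hzC : z ∈ C := hFix ⟨hzfix, hzL⟩
  obtain ⟨nu, delta, hnu, hdelta, hloc⟩ := hlocal z hzC
  -- eventually in ball and 1/(φ n +1) < nu
  have hball : ∀ᶠ n in Filter.atTop, x (φ n) ∈ Metric.closedBall z delta := by
    have := Metric.tendsto_nhds.mp hlim delta hdelta
    filter_upwards [this] with n hn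
    exact Metric.mem_closedBall.mpr hn.le
  have hsmall : ∀ᶠ n in Filter.atTop, (1 / (φ n + 1 : ℝ)) < nu := by
    have := hinv.eventually (eventually_lt_nhds hnu)
    exact this
  obtain ⟨n, hn1, hn2⟩ := (hball.and hsmall).exists
  have h1 : nu * Metric.infDist (x (φ n)) C ≤ ‖x (φ n) - T (x (φ n))‖ :=
    hloc _ ⟨hn1, hxL (φ n)⟩
  have h2 := hxlt (φ n)
  have hd0 : 0 ≤ Metric.infDist (x (φ n)) C := Metric.infDist_nonneg
  have hdpos : 0 < Metric.infDist (x (φ n)) C := by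
    rcases hd0.lt_or_eq with h | h
    · exact h
    · rw [← h] at h2; simp at h2; linarith [norm_nonneg (x (φ n) - T (x (φ n)))]
  nlinarith [h1, h2, hn2]
end

section
/- Let A, B be nonempty closed subsets of a Euclidean space X with A ∩ B ≠ ∅, let L be an affine subspace containing A ∪ B, let λ, μ ∈ (0, 2], α > 0, and set η := 1 − α + α(1 − λ)(1 − μ). Then for every c ∈ A ∩ B and every u ∈ (L − L)^⊥: P_A(c + u) = P_B(c + u) = {c} and T(c + u) = {c + ηu}, where T := (1 − α)Id + α P_B^μ P_A^λ is the generalized Douglas–Rachford operator. Consequently A ∩ B ⊆ Fix T, and if (1 − λ)(1 − μ) = 1 then (A ∩ B) + (L − L)^⊥ ⊆ Fix T. -/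
/-!
If `c ∈ C ⊆ L` and `u ⊥ L - L`, then Pythagoras gives `‖c + u - a‖² = ‖u‖² + ‖c - a‖²` for every
`a ∈ C`, so `c` is the unique nearest point of `C` to `c + u`. Hence `P_C^λ (c + u) = c + (1 - λ) u`
is again of the form `c + u'` with `u' ⊥ L - L`, and composing the two relaxed projectors with the
averaging step scales `u` by `η`.
-/

open Pointwise

/-- The set-valued relaxed projector `P_C^λ`. -/
def rproj {X : Type*} [NormedAddCommGroup X] [InnerProductSpace ℝ X]
    (C : Set X) (lam : ℝ) (x : X) : Set X :=
  (fun c => (1 - lam) • x + lam • c) '' projSet C x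

/-- The set-valued generalized Douglas–Rachford operator. -/
def gDR {X : Type*} [NormedAddCommGroup X] [InnerProductSpace ℝ X]
    (A B : Set X) (lam mu alpha : ℝ) (x : X) : Set X :=
  {y | ∃ r ∈ rproj A lam x, ∃ s ∈ rproj B mu r, y = (1 - alpha) • x + alpha • s}

section

variable {X : Type*} [NormedAddCommGroup X] [InnerProductSpace ℝ X]

theorem projSet_eq_singleton_of_forall_dist_lt {C : Set X} {x c : X} (hc : c ∈ C)
    (hlt : ∀ a ∈ C, a ≠ c → dist x c < dist x a) : projSet C x = {c} := by
  have hle : ∀ a ∈ C, dist x c ≤ dist x a := fun a ha => by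
    rcases eq_or_ne a c with rfl | hac
    · rfl
    · exact (hlt a ha hac).le
  have hinf : Metric.infDist x C = dist x c :=
    le_antisymm (Metric.infDist_le_dist_of_mem hc) ((Metric.le_infDist ⟨c, hc⟩).2 hle)
  ext a
  simp only [projSet, hinf, Set.mem_sep_iff, Set.mem_singleton_iff]
  constructor
  · rintro ⟨ha, hdist⟩
    by_contra hac
    exact (hlt a ha hac).ne hdist.symm
  · rintro rfl
    exact ⟨hc, rfl⟩

theorem dist_add_orthogonal_sq {L : AffineSubspace ℝ X} {c a u : X} (hc : c ∈ L) (ha : a ∈ L)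
    (hu : u ∈ L.directionᗮ) : dist (c + u) a ^ 2 = ‖u‖ ^ 2 + dist c a ^ 2 := by
  have horth : inner ℝ u (c - a) = 0 :=
    Submodule.inner_left_of_mem_orthogonal (AffineSubspace.vsub_mem_direction hc ha) hu
  rw [dist_eq_norm, dist_eq_norm, show c + u - a = u + (c - a) by abel, sq, sq, sq,
    norm_add_sq_eq_norm_sq_add_norm_sq_of_inner_eq_zero u (c - a) horth]

theorem projSet_add_orthogonal {C : Set X} {L : AffineSubspace ℝ X} (hCL : C ⊆ L) {c u : X}
    (hc : c ∈ C) (hu : u ∈ L.directionᗮ) : projSet C (c + u) = {c} := by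
  refine projSet_eq_singleton_of_forall_dist_lt hc fun a ha hac => ?_
  have hsq : dist (c + u) c ^ 2 < dist (c + u) a ^ 2 := by
    rw [dist_add_orthogonal_sq (hCL hc) (hCL ha) hu, dist_add_orthogonal_sq (hCL hc) (hCL hc) hu,
      dist_self]
    have := pow_pos (dist_pos.2 hac.symm) 2
    linarith
  exact lt_of_pow_lt_pow_left₀ 2 dist_nonneg hsq

theorem rproj_add_orthogonal {C : Set X} {L : AffineSubspace ℝ X} (hCL : C ⊆ L) {c u : X}
    (hc : c ∈ C) (hu : u ∈ L.directionᗮ) (lam : ℝ) :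
    rproj C lam (c + u) = {c + (1 - lam) • u} := by
  rw [rproj, projSet_add_orthogonal hCL hc hu, Set.image_singleton]
  congr 1
  module

theorem gDR_eq_singleton {A B : Set X} {lam mu alpha : ℝ} {x r s : X}
    (hr : rproj A lam x = {r}) (hs : rproj B mu r = {s}) :
    gDR A B lam mu alpha x = {(1 - alpha) • x + alpha • s} := by
  ext y
  simp [gDR, hr, hs]

theorem gDR_add_orthogonal {A B : Set X} {L : AffineSubspace ℝ X} (hAL : A ⊆ L) (hBL : B ⊆ L)
    {c u : X} (hc : c ∈ A ∩ B) (hu : u ∈ L.directionᗮ) (lam mu alpha : ℝ) :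
    gDR A B lam mu alpha (c + u) =
      {c + (1 - alpha + alpha * (1 - lam) * (1 - mu)) • u} := by
  have hu' : (1 - lam) • u ∈ L.directionᗮ := Submodule.smul_mem _ _ hu
  rw [gDR_eq_singleton (rproj_add_orthogonal hAL hc.1 hu lam)
    (rproj_add_orthogonal hBL hc.2 hu' mu)]
  congr 1
  module

end

theorem gDR_fixed_points_general {X : Type*} [NormedAddCommGroup X] [InnerProductSpace ℝ X]
    (A B : Set X)
    (L : AffineSubspace ℝ X) (hABL : A ∪ B ⊆ (L : Set X))
    (lam mu alpha : ℝ)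
    (eta : ℝ) (heta : eta = 1 - alpha + alpha * (1 - lam) * (1 - mu)) :
    (∀ c ∈ A ∩ B, ∀ u ∈ (L.directionᗮ : Set X),
        projSet A (c + u) = {c} ∧ projSet B (c + u) = {c} ∧
          gDR A B lam mu alpha (c + u) = {c + eta • u}) ∧
      A ∩ B ⊆ {x | x ∈ gDR A B lam mu alpha x} ∧
      ((1 - lam) * (1 - mu) = 1 →
        (A ∩ B) + (L.directionᗮ : Set X) ⊆ {x | x ∈ gDR A B lam mu alpha x}) := by
  obtain ⟨hAL, hBL⟩ := Set.union_subset_iff.1 hABL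
  have hT : ∀ c ∈ A ∩ B, ∀ u ∈ L.directionᗮ, gDR A B lam mu alpha (c + u) = {c + eta • u} :=
    fun c hc u hu => heta ▸ gDR_add_orthogonal hAL hBL hc hu lam mu alpha
  refine ⟨fun c hc u hu => ⟨projSet_add_orthogonal hAL hc.1 hu,
    projSet_add_orthogonal hBL hc.2 hu, hT c hc u hu⟩, fun c hc => ?_, fun hprod x hx => ?_⟩
  · have hc0 := hT c hc 0 (Submodule.zero_mem _)
    rw [smul_zero, add_zero] at hc0
    rw [Set.mem_ofPred_eq, hc0]
    exact Set.mem_singleton c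
  · obtain ⟨c, hc, u, hu, rfl⟩ := Set.mem_add.1 hx
    have heta1 : eta = 1 := by rw [heta, mul_assoc, hprod]; ring
    have hcu := hT c hc u hu
    rw [heta1, one_smul] at hcu
    rw [Set.mem_ofPred_eq, hcu]
    exact Set.mem_singleton (c + u)

theorem gDR_fixed_points {X : Type*} [NormedAddCommGroup X] [InnerProductSpace ℝ X]
    [FiniteDimensional ℝ X]
    (A B : Set X) (hAcl : IsClosed A) (hBcl : IsClosed B) (hAB : (A ∩ B).Nonempty)
    (L : AffineSubspace ℝ X) [Nonempty L] (hABL : A ∪ B ⊆ (L : Set X))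
    (lam mu alpha : ℝ) (hlam0 : 0 < lam) (hlam2 : lam ≤ 2)
    (hmu0 : 0 < mu) (hmu2 : mu ≤ 2) (halpha : 0 < alpha)
    (eta : ℝ) (heta : eta = 1 - alpha + alpha * (1 - lam) * (1 - mu)) :
    (∀ c ∈ A ∩ B, ∀ u ∈ (L.directionᗮ : Set X),
        projSet A (c + u) = {c} ∧ projSet B (c + u) = {c} ∧
          gDR A B lam mu alpha (c + u) = {c + eta • u}) ∧
      A ∩ B ⊆ {x | x ∈ gDR A B lam mu alpha x} ∧
      ((1 - lam) * (1 - mu) = 1 →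
        (A ∩ B) + (L.directionᗮ : Set X) ⊆ {x | x ∈ gDR A B lam mu alpha x}) :=
  gDR_fixed_points_general A B L hABL lam mu alpha eta heta
end

section
/- Let A, B be nonempty closed convex subsets of a real Hilbert space X with A ∩ B ≠ ∅, let λ, μ ∈ (0, 2] with min{λ, μ} < 2, and let α > 0. Then Fix T = A ∩ B, where T := (1 − α)Id + α P_B^μ P_A^λ. -/
set_option maxHeartbeats 1000000

open scoped RealInnerProductSpace

lemma gDR_proj_char {X : Type*} [NormedAddCommGroup X] [InnerProductSpace ℝ X]
    {C : Set X} (hC : Convex ℝ C) {x p : X} (hp : p ∈ C)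
    (hmin : ∀ c ∈ C, dist x p ≤ dist x c) :
    ∀ c ∈ C, ⟪x - p, c - p⟫ ≤ 0 := by
  haveI : Nonempty C := ⟨⟨p, hp⟩⟩
  rw [← norm_eq_iInf_iff_real_inner_le_zero hC hp]
  apply le_antisymm
  · exact le_ciInf fun w => by simpa [dist_eq_norm] using hmin w w.2
  · exact ciInf_le ⟨0, fun v ⟨w, hw⟩ => hw ▸ norm_nonneg _⟩ (⟨p, hp⟩ : C)

theorem gDR_fix_eq_intersection {X : Type*} [NormedAddCommGroup X] [InnerProductSpace ℝ X]
    [CompleteSpace X]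
    (A B : Set X) (hAne : A.Nonempty) (hBne : B.Nonempty)
    (hAcl : IsClosed A) (hBcl : IsClosed B)
    (hAcvx : Convex ℝ A) (hBcvx : Convex ℝ B) (hAB : (A ∩ B).Nonempty)
    (PA PB : X → X)
    (hPA : ∀ x : X, PA x ∈ A ∧ ∀ c ∈ A, dist x (PA x) ≤ dist x c)
    (hPB : ∀ x : X, PB x ∈ B ∧ ∀ c ∈ B, dist x (PB x) ≤ dist x c)
    (lam mu alpha : ℝ) (hlam0 : 0 < lam) (hlam2 : lam ≤ 2)
    (hmu0 : 0 < mu) (hmu2 : mu ≤ 2) (hmin : lam < 2 ∨ mu < 2) (halpha : 0 < alpha)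
    (T : X → X)
    (hT : ∀ x : X, T x = (1 - alpha) • x +
      alpha • ((1 - mu) • ((1 - lam) • x + lam • PA x) +
        mu • PB ((1 - lam) • x + lam • PA x))) :
    {x : X | T x = x} = A ∩ B := by
  ext x
  simp only [Set.mem_setOf_eq, Set.mem_inter_iff]
  constructor
  · intro hx
    obtain ⟨w, hwA, hwB⟩ := hAB
    set a := PA x with ha
    set y := (1 - lam) • x + lam • a with hy
    set b := PB y with hb
    set d := a - x with hd
    have hTx : (1 - alpha) • x + alpha • ((1 - mu) • y + mu • b) = x := by
      rw [← hT x]; exact hx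
    -- α • (s - x) = 0
    have hs0 : alpha • ((1 - mu) • y + mu • b - x) = (0 : X) := by
      linear_combination (norm := module) hTx
    have hs : (1 - mu) • y + mu • b = x := by
      rcases smul_eq_zero.mp hs0 with h | h
      · exact absurd h (ne_of_gt halpha)
      · exact sub_eq_zero.mp h
    have hyd : y = x + lam • d := by rw [hy, hd]; module
    have hby : mu • (b - y) = -(lam • d) := by
      have : x - y = -(lam • d) := by rw [hyd]; module
      rw [← this]
      linear_combination (norm := module) hs
    have hba : mu • (b - a) = (lam * mu - lam - mu) • d := by
      linear_combination (norm := module) hby + mu • hyd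
    -- projection inequalities
    have h1 : ⟪x - a, w - a⟫ ≤ 0 := gDR_proj_char hAcvx (hPA x).1 (hPA x).2 w hwA
    have h2 : ⟪y - b, w - b⟫ ≤ 0 := gDR_proj_char hBcvx (hPB y).1 (hPB y).2 w hwB
    have hxa : x - a = -d := by rw [hd]; module
    have h1' : 0 ≤ ⟪d, w - a⟫ := by
      rw [hxa, inner_neg_left] at h1; linarith
    have hyb : lam • d = mu • (y - b) := by
      have := hby; rw [show mu • (y - b) = -(mu • (b - y)) by module, this]; simp
    have h2' : ⟪d, w - b⟫ ≤ 0 := by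
      have hmul : ⟪mu • (y - b), w - b⟫ ≤ 0 := by
        rw [real_inner_smul_left]
        exact mul_nonpos_of_nonneg_of_nonpos hmu0.le h2
      rw [← hyb, real_inner_smul_left] at hmul
      nlinarith [hmul]
    -- combine
    have hkey : 0 ≤ ⟪d, b - a⟫ := by
      have : ⟪d, b - a⟫ = ⟪d, w - a⟫ - ⟪d, w - b⟫ := by
        rw [← inner_sub_right]; congr 1; module
      rw [this]; linarith
    have hdz : d = 0 := by
      have hc : lam * mu - lam - mu < 0 := by
        rcases hmin with h | h
        · nlinarith
        · nlinarith
      have hinner : ⟪d, mu • (b - a)⟫ = (lam * mu - lam - mu) * ‖d‖ ^ 2 := by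
        rw [hba, real_inner_smul_right, real_inner_self_eq_norm_sq]
      have : 0 ≤ (lam * mu - lam - mu) * ‖d‖ ^ 2 := by
        rw [← hinner, real_inner_smul_right]
        exact mul_nonneg hmu0.le hkey
      have hnz : ‖d‖ ^ 2 ≤ 0 := by nlinarith
      have : ‖d‖ = 0 := by nlinarith [sq_nonneg ‖d‖, norm_nonneg d]
      exact norm_eq_zero.mp this
    have hax : a = x := by rwa [hd, sub_eq_zero] at hdz
    have hxA : x ∈ A := hax ▸ (hPA x).1
    have hyx : y = x := by rw [hyd, hdz]; simp
    have hbx : b = x := by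
      have : mu • (b - y) = 0 := by rw [hby, hdz]; simp
      rcases smul_eq_zero.mp this with h | h
      · exact absurd h (ne_of_gt hmu0)
      · rw [sub_eq_zero.mp h, hyx]
    have hxB : x ∈ B := hbx ▸ (hPB y).1
    exact ⟨hxA, hxB⟩
  · rintro ⟨hxA, hxB⟩
    have hPAx : PA x = x := by
      have h := (hPA x).2 x hxA
      simp only [dist_self] at h
      have := dist_nonneg (x := x) (y := PA x)
      have : dist x (PA x) = 0 := le_antisymm h dist_nonneg
      exact (dist_eq_zero.mp this).symm
    have hyx : (1 - lam) • x + lam • PA x = x := by rw [hPAx]; module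
    have hPBx : PB x = x := by
      have h := (hPB x).2 x hxB
      have : dist x (PB x) = 0 := le_antisymm (by simpa using h) dist_nonneg
      exact (dist_eq_zero.mp this).symm
    rw [hT x, hyx, hPBx]
    module
end

section
/- Let A, B be nonempty closed convex subsets of a real Hilbert space X, let λ, μ ∈ (0, 2] with λ < 2 or μ < 2, set β̂ := (λ/(2−λ) + μ/(2−μ))^{-1}, and let α ∈ (0, 1 + β̂). Then the generalized Douglas–Rachford operator T := (1 − α)Id + α P_B^μ P_A^λ is α/(1 + β̂)-averaged, i.e., T = (1 − κ)Id + κR with κ := α/(1 + β̂) ∈ (0,1) and R nonexpansive. -/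
/-!
Metric projections onto convex sets are firmly nonexpansive. Measuring averagedness by the
quadratic inequality `‖S x - S y‖² + β ‖(Id - S) x - (Id - S) y‖² ≤ ‖x - y‖²`, a relaxation with
parameter `t` turns the constant `β` into `(1 + β) / t - 1`, so `P_A^λ` and `P_B^μ` have constants
`(2 - λ) / λ` and `(2 - μ) / μ`. Along a composition the constants combine like resistors in
parallel, by the triangle inequality and Cauchy–Schwarz, which gives `β̂`. Finally, relaxing with
parameter `1 + β̂` leaves the constant `0`, that is a nonexpansive operator `R`, and `T` is the
relaxation of `R` with parameter `α / (1 + β̂)`.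
-/

open RealInnerProductSpace

section Relax

variable {X : Type*} [AddCommGroup X] [Module ℝ X]

/-- `P_A^λ` is `relax λ P_A`. -/
def relax (t : ℝ) (S : X → X) (x : X) : X :=
  (1 - t) • x + t • S x

theorem relax_relax (s t : ℝ) (S : X → X) (x : X) :
    relax s (relax t S) x = relax (s * t) S x := by
  simp only [relax]
  module

end Relax

theorem mul_div_add_mul_sq_le {c₁ c₂ : ℝ} (hc₁ : 0 ≤ c₁) (hc₂ : 0 ≤ c₂) (a b : ℝ) :
    c₁ * c₂ / (c₁ + c₂) * (a + b) ^ 2 ≤ c₁ * a ^ 2 + c₂ * b ^ 2 := by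
  rcases (add_nonneg hc₁ hc₂).eq_or_lt with h | h
  · rw [← h, div_zero, zero_mul]
    positivity
  · rw [div_mul_eq_mul_div, div_le_iff₀ h]
    nlinarith [sq_nonneg (c₁ * a - c₂ * b)]

section Averaged

variable {X : Type*} [NormedAddCommGroup X]

/-- `S` is `1 / (1 + β)`-averaged, in its characterisation by a quadratic inequality. -/
def IsAveragedWith (β : ℝ) (S : X → X) : Prop :=
  ∀ x y, ‖S x - S y‖ ^ 2 + β * ‖(x - y) - (S x - S y)‖ ^ 2 ≤ ‖x - y‖ ^ 2

namespace IsAveragedWith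

variable {β : ℝ} {S : X → X}

theorem norm_sub_le (h : IsAveragedWith β S) (hβ : 0 ≤ β) (x y : X) :
    ‖S x - S y‖ ≤ ‖x - y‖ := by
  refine (pow_le_pow_iff_left₀ (norm_nonneg _) (norm_nonneg _) two_ne_zero).1 ?_
  linarith [h x y, mul_nonneg hβ (sq_nonneg ‖(x - y) - (S x - S y)‖)]

theorem comp {c₁ c₂ : ℝ} {Q : X → X} (hS : IsAveragedWith c₂ S)
    (hQ : IsAveragedWith c₁ Q) (hc₁ : 0 ≤ c₁) (hc₂ : 0 ≤ c₂) :
    IsAveragedWith (c₁ * c₂ / (c₁ + c₂)) (S ∘ Q) := by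
  intro x y
  set u := x - y
  set q := Q x - Q y
  set s := S (Q x) - S (Q y)
  have htri : ‖u - s‖ ^ 2 ≤ (‖u - q‖ + ‖q - s‖) ^ 2 := by
    gcongr
    exact norm_sub_le_norm_sub_add_norm_sub u q s
  have hβ := mul_le_mul_of_nonneg_left htri (by positivity : 0 ≤ c₁ * c₂ / (c₁ + c₂))
  have hparallel := mul_div_add_mul_sq_le hc₁ hc₂ ‖u - q‖ ‖q - s‖
  have hQxy := hQ x y
  have hSxy := hS (Q x) (Q y)
  simp only [Function.comp_apply]
  linarith

end IsAveragedWith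

variable [InnerProductSpace ℝ X]

theorem norm_sub_sq_add_mul_le_iff (β : ℝ) (u d : X) :
    ‖u - d‖ ^ 2 + β * ‖d‖ ^ 2 ≤ ‖u‖ ^ 2 ↔ (1 + β) * ‖d‖ ^ 2 ≤ 2 * ⟪u, d⟫ := by
  rw [norm_sub_sq_real]
  constructor <;> intro h <;> linarith

theorem isAveragedWith_iff {β : ℝ} {S : X → X} :
    IsAveragedWith β S ↔ ∀ x y,
      (1 + β) * ‖(x - y) - (S x - S y)‖ ^ 2 ≤ 2 * ⟪x - y, (x - y) - (S x - S y)⟫ := by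
  refine forall₂_congr fun x y => ?_
  rw [← norm_sub_sq_add_mul_le_iff, sub_sub_cancel]

namespace IsAveragedWith

variable {β : ℝ} {S : X → X}

theorem relax (h : IsAveragedWith β S) {t : ℝ} (ht : 0 < t) :
    IsAveragedWith ((1 + β) / t - 1) (relax t S) := by
  rw [isAveragedWith_iff] at h ⊢
  intro x y
  have hdiff : (x - y) - (_root_.relax t S x - _root_.relax t S y)
      = t • ((x - y) - (S x - S y)) := by
    simp only [_root_.relax]
    module
  rw [hdiff, norm_smul, real_inner_smul_right, Real.norm_of_nonneg ht.le]
  calc (1 + ((1 + β) / t - 1)) * (t * ‖(x - y) - (S x - S y)‖) ^ 2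
      = t * ((1 + β) * ‖(x - y) - (S x - S y)‖ ^ 2) := by field_simp; ring
    _ ≤ t * (2 * ⟪x - y, (x - y) - (S x - S y)⟫) := mul_le_mul_of_nonneg_left (h x y) ht.le
    _ = 2 * (t * ⟪x - y, (x - y) - (S x - S y)⟫) := by ring

theorem nonexpansive_relax_one_add (h : IsAveragedWith β S) (hβ : 0 ≤ β) (x y : X) :
    ‖_root_.relax (1 + β) S x - _root_.relax (1 + β) S y‖ ≤ ‖x - y‖ := by
  have h0 := h.relax (t := 1 + β) (by linarith)
  rw [div_self (by linarith), sub_self] at h0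
  exact h0.norm_sub_le le_rfl x y

end IsAveragedWith

end Averaged

section Projection

variable {X : Type*} [NormedAddCommGroup X] [InnerProductSpace ℝ X]

def IsMetricProjection (C : Set X) (P : X → X) : Prop :=
  ∀ x, P x ∈ C ∧ ∀ c ∈ C, dist x (P x) ≤ dist x c

variable {C : Set X} {P : X → X}

namespace IsMetricProjection

theorem real_inner_le_zero (hP : IsMetricProjection C P) (hC : Convex ℝ C) (x : X) {c : X}
    (hc : c ∈ C) : ⟪x - P x, c - P x⟫ ≤ 0 := by
  have : Nonempty C := ⟨⟨P x, (hP x).1⟩⟩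
  refine (norm_eq_iInf_iff_real_inner_le_zero hC (hP x).1).1 ?_ c hc
  have hbdd : BddBelow (Set.range fun w : C => ‖x - w‖) := by
    refine ⟨0, ?_⟩
    rintro _ ⟨w, rfl⟩
    exact norm_nonneg _
  refine le_antisymm (le_ciInf fun w => ?_) (ciInf_le hbdd ⟨P x, (hP x).1⟩)
  simpa only [dist_eq_norm] using (hP x).2 w w.2

/-- `IsAveragedWith 1` is firm nonexpansiveness. -/
theorem isAveragedWith_one (hP : IsMetricProjection C P) (hC : Convex ℝ C) :
    IsAveragedWith 1 P := by
  rw [isAveragedWith_iff]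
  intro x y
  have hx := hP.real_inner_le_zero hC x (hP y).1
  have hy := hP.real_inner_le_zero hC y (hP x).1
  have key : ⟪x - y, (x - y) - (P x - P y)⟫ - ‖(x - y) - (P x - P y)‖ ^ 2
      = -⟪x - P x, P y - P x⟫ - ⟪y - P y, P x - P y⟫ := by
    rw [← real_inner_self_eq_norm_sq, ← inner_sub_left, sub_sub_cancel,
      show P y - P x = -(P x - P y) from (neg_sub _ _).symm, inner_neg_right,
      show (x - y) - (P x - P y) = (x - P x) - (y - P y) by abel, inner_sub_right,
      real_inner_comm (x - P x), real_inner_comm (y - P y)]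
    ring
  linarith

theorem isAveragedWith_relax (hP : IsMetricProjection C P) (hC : Convex ℝ C) {t : ℝ}
    (ht : 0 < t) : IsAveragedWith ((2 - t) / t) (relax t P) := by
  convert (hP.isAveragedWith_one hC).relax ht using 1
  field_simp
  ring

end IsMetricProjection

end Projection

theorem gDR_averagedness_general {X : Type*} [NormedAddCommGroup X] [InnerProductSpace ℝ X]
    (A B : Set X)
    (hAcvx : Convex ℝ A) (hBcvx : Convex ℝ B)
    (PA PB : X → X)
    (hPA : ∀ x : X, PA x ∈ A ∧ ∀ c ∈ A, dist x (PA x) ≤ dist x c)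
    (hPB : ∀ x : X, PB x ∈ B ∧ ∀ c ∈ B, dist x (PB x) ≤ dist x c)
    (lam mu : ℝ) (hlam0 : 0 < lam) (hlam2 : lam ≤ 2)
    (hmu0 : 0 < mu) (hmu2 : mu ≤ 2)
    (betaHat : ℝ)
    (hbetaHat : betaHat = if lam = 2 ∨ mu = 2 then 0
      else (lam / (2 - lam) + mu / (2 - mu))⁻¹)
    (alpha : ℝ) (halpha0 : 0 < alpha) (halpha1 : alpha < 1 + betaHat)
    (T : X → X)
    (hT : ∀ x : X, T x = (1 - alpha) • x +
      alpha • ((1 - mu) • ((1 - lam) • x + lam • PA x) +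
        mu • PB ((1 - lam) • x + lam • PA x)))
    (kappa : ℝ) (hkappa : kappa = alpha / (1 + betaHat)) :
    0 < kappa ∧ kappa < 1 ∧
      ∃ R : X → X, (∀ x y : X, ‖R x - R y‖ ≤ ‖x - y‖) ∧
        ∀ x : X, T x = (1 - kappa) • x + kappa • R x := by
  set S := relax mu PB ∘ relax lam PA
  have hc₁ : 0 ≤ (2 - lam) / lam := div_nonneg (by linarith) hlam0.le
  have hc₂ : 0 ≤ (2 - mu) / mu := div_nonneg (by linarith) hmu0.le
  -- with `x / 0 = 0` the right-hand side is `0` also for `λ = μ = 2`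
  have hβ : betaHat = (2 - lam) / lam * ((2 - mu) / mu) / ((2 - lam) / lam + (2 - mu) / mu) := by
    rw [hbetaHat]
    split_ifs with h
    · rcases h with rfl | rfl <;> simp
    · rw [not_or] at h
      have hl : (2 - lam) / lam ≠ 0 := div_ne_zero (sub_ne_zero.2 (Ne.symm h.1)) hlam0.ne'
      have hm : (2 - mu) / mu ≠ 0 := div_ne_zero (sub_ne_zero.2 (Ne.symm h.2)) hmu0.ne'
      rw [← inv_div (2 - lam), ← inv_div (2 - mu), inv_add_inv hl hm, inv_div]
  have hS : IsAveragedWith betaHat S := hβ ▸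
    (IsMetricProjection.isAveragedWith_relax hPB hBcvx hmu0).comp
      (IsMetricProjection.isAveragedWith_relax hPA hAcvx hlam0) hc₁ hc₂
  have hβ₀ : 0 ≤ betaHat := hβ ▸ by positivity
  have hβ₁ : 0 < 1 + betaHat := by linarith
  refine ⟨hkappa ▸ by positivity, by rwa [hkappa, div_lt_one hβ₁],
    relax (1 + betaHat) S, hS.nonexpansive_relax_one_add hβ₀, fun x => ?_⟩
  calc T x = relax alpha S x := hT x
    _ = relax (kappa * (1 + betaHat)) S x := by rw [hkappa, div_mul_cancel₀ _ hβ₁.ne']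
    _ = relax kappa (relax (1 + betaHat) S) x := (relax_relax _ _ _ _).symm

theorem gDR_averagedness {X : Type*} [NormedAddCommGroup X] [InnerProductSpace ℝ X]
    [CompleteSpace X]
    (A B : Set X) (hAne : A.Nonempty) (hBne : B.Nonempty)
    (hAcl : IsClosed A) (hBcl : IsClosed B)
    (hAcvx : Convex ℝ A) (hBcvx : Convex ℝ B)
    (PA PB : X → X)
    (hPA : ∀ x : X, PA x ∈ A ∧ ∀ c ∈ A, dist x (PA x) ≤ dist x c)
    (hPB : ∀ x : X, PB x ∈ B ∧ ∀ c ∈ B, dist x (PB x) ≤ dist x c)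
    (lam mu : ℝ) (hlam0 : 0 < lam) (hlam2 : lam ≤ 2)
    (hmu0 : 0 < mu) (hmu2 : mu ≤ 2) (hmin : lam < 2 ∨ mu < 2)
    (betaHat : ℝ)
    (hbetaHat : betaHat = if lam = 2 ∨ mu = 2 then 0
      else (lam / (2 - lam) + mu / (2 - mu))⁻¹)
    (alpha : ℝ) (halpha0 : 0 < alpha) (halpha1 : alpha < 1 + betaHat)
    (T : X → X)
    (hT : ∀ x : X, T x = (1 - alpha) • x +
      alpha • ((1 - mu) • ((1 - lam) • x + lam • PA x) +
        mu • PB ((1 - lam) • x + lam • PA x)))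
    (kappa : ℝ) (hkappa : kappa = alpha / (1 + betaHat)) :
    0 < kappa ∧ kappa < 1 ∧
      ∃ R : X → X, (∀ x y : X, ‖R x - R y‖ ≤ ‖x - y‖) ∧
        ∀ x : X, T x = (1 - kappa) • x + kappa • R x :=
  gDR_averagedness_general A B hAcvx hBcvx PA PB hPA hPB lam mu hlam0 hlam2 hmu0 hmu2 betaHat
    hbetaHat alpha halpha0 halpha1 T hT kappa hkappa
end
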